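/- In the quantized enveloping algebra negative half for the graph with two vertices i, j joined by an edge (i·j = −1), over ℚ(q): the elements θ_i^{(a)}θ_j^{(b)}θ_i^{(c)} with b ≥ a + c, together with θ_j^{(c)}θ_i^{(b)}θ_j^{(a)} with b > a + c, span the algebra f as a ℚ(q)-vector space, where f is the quotient of the free algebra on θ_i, θ_j by the quantum Serre relations (q+q⁻¹)θ_iθ_jθ_i = θ_i²θ_j + θ_jθ_i² and (q+q⁻¹)θ_jθ_iθ_j = θ_j²θ_i + θ_iθ_j². -/

import Mathlib

noncomputable section

/-- The field ℚ(q). -/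
abbrev Qq : Type := RatFunc ℚ

/-- The variable q of ℚ(q). -/
def qv : Qq := RatFunc.X

/-- The quantum integer [n] = (qⁿ − q⁻ⁿ)/(q − q⁻¹). -/
def qint (n : ℕ) : Qq := (qv ^ n - qv⁻¹ ^ n) / (qv - qv⁻¹)

/-- The quantum factorial [n]! = [n][n−1]⋯[1]. -/
def qfac : ℕ → Qq
  | 0 => 1
  | n + 1 => qint (n + 1) * qfac n

/-- Generators θ_i (= true) and θ_j (= false) of the free algebra. -/
def θfree (b : Bool) : FreeAlgebra Qq Bool := FreeAlgebra.ι Qq b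

/-- The two quantum Serre relations: (q+q⁻¹)θ_iθ_jθ_i = θ_i²θ_j + θ_jθ_i²,
and the same with i and j exchanged. -/
inductive SerreRel : FreeAlgebra Qq Bool → FreeAlgebra Qq Bool → Prop
  | serre (b : Bool) :
      SerreRel ((qv + qv⁻¹) • (θfree b * θfree (!b) * θfree b))
        (θfree b * θfree b * θfree (!b) + θfree (!b) * θfree b * θfree b)

/-- f, the negative half of quantum 𝔰𝔩₃ over ℚ(q): the quotient of the free algebra
on θ_i, θ_j by the quantum Serre relations. -/
abbrev Uminus : Type := RingQuot SerreRel

/-- The generators θ_i, θ_j of f. -/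
def θ (b : Bool) : Uminus := RingQuot.mkAlgHom Qq SerreRel (θfree b)

/-- Divided power θ^{(a)} = θ^a / [a]!. -/
def dp (x : Uminus) (a : ℕ) : Uminus := (qfac a)⁻¹ • x ^ a

/-!
Put `z = θ_i θ_j - q θ_j θ_i`. The Serre relations say exactly that `θ_i z = q⁻¹ z θ_i` and
`z θ_j = q⁻¹ θ_j z`, and then `θ_i θ_j ^ (n+1) = q ^ (n+1) θ_j ^ (n+1) θ_i + [n+1] θ_j ^ n z`.
Hence the monomials `θ_j ^ a z ^ b θ_i ^ c` span `f`. Solving the last identity for `θ_j ^ n z`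
and moving `z` to the right, `θ_j ^ a z ^ b θ_i ^ c` is a combination of monomials
`θ_i ^ α θ_j ^ β θ_i ^ γ` with `β - α - γ = a - c`; symmetrically it is a combination of
`θ_j ^ γ θ_i ^ β θ_j ^ α` with `β - α - γ = c - a`. Use the first when `c ≤ a`, the second
when `a < c`.
-/

lemma qv_ne_zero : qv ≠ 0 := RatFunc.X_ne_zero

lemma qv_pow_ne_one {n : ℕ} (hn : n ≠ 0) : qv ^ n ≠ 1 := by
  intro h
  have hX : (Polynomial.X : Polynomial ℚ) ^ n = 1 :=
    IsFractionRing.injective (Polynomial ℚ) Qq (by simpa [qv] using h)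
  simpa [hn] using congrArg Polynomial.natDegree hX

lemma qv_pow_ne_inv_pow {n : ℕ} (hn : n ≠ 0) : qv ^ n ≠ qv⁻¹ ^ n := by
  intro h
  apply qv_pow_ne_one (Nat.mul_ne_zero two_ne_zero hn)
  rw [two_mul, pow_add]
  nth_rw 1 [h]
  rw [← mul_pow, inv_mul_cancel₀ qv_ne_zero, one_pow]

lemma qv_sub_inv_ne_zero : qv - qv⁻¹ ≠ 0 := by
  simpa using sub_ne_zero.2 (qv_pow_ne_inv_pow one_ne_zero)

lemma qint_ne_zero {n : ℕ} (hn : n ≠ 0) : qint n ≠ 0 :=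
  div_ne_zero (sub_ne_zero.2 (qv_pow_ne_inv_pow hn)) qv_sub_inv_ne_zero

lemma qfac_ne_zero (n : ℕ) : qfac n ≠ 0 := by
  induction n with
  | zero => exact one_ne_zero
  | succ n ih => exact mul_ne_zero (qint_ne_zero n.succ_ne_zero) ih

lemma qint_one : qint 1 = 1 := by
  simp [qint, div_self qv_sub_inv_ne_zero]

lemma qint_succ (n : ℕ) : qint (n + 1) = qv * qint n + qv⁻¹ ^ n := by
  apply mul_right_cancel₀ qv_sub_inv_ne_zero
  simp only [qint, add_mul, mul_assoc, div_mul_cancel₀ _ qv_sub_inv_ne_zero]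
  ring

section QCommuting

variable {R A : Type*} [CommSemiring R] [Semiring A] [Algebra R A] {a b : A} {c : R}

theorem pow_mul_eq_smul_mul_pow (h : a * b = c • (b * a)) (n : ℕ) :
    a ^ n * b = c ^ n • (b * a ^ n) := by
  induction n with
  | zero => simp
  | succ n ih =>
    rw [pow_succ, mul_assoc, h, mul_smul_comm, ← mul_assoc, ih, smul_mul_assoc, smul_smul,
      mul_assoc, ← pow_succ, ← pow_succ']

theorem mul_pow_eq_smul_pow_mul (h : a * b = c • (b * a)) (n : ℕ) :
    a * b ^ n = c ^ n • (b ^ n * a) := by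
  induction n with
  | zero => simp
  | succ n ih =>
    rw [pow_succ', ← mul_assoc, h, smul_mul_assoc, mul_assoc, ih, mul_smul_comm, smul_smul,
      ← mul_assoc, ← pow_succ']

end QCommuting

theorem Submodule.eq_top_of_one_mem_of_mul_mem {R A : Type*} [CommSemiring R] [Semiring A]
    [Algebra R A] {s : Set A} (hs : Algebra.adjoin R s = ⊤) {N : Submodule R A} (h1 : 1 ∈ N)
    (hmul : ∀ g ∈ s, ∀ n ∈ N, g * n ∈ N) : N = ⊤ := by
  have adjoin_mul_mem (v : A) (hv : v ∈ Algebra.adjoin R s) : ∀ n ∈ N, v * n ∈ N := by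
    induction hv using Algebra.adjoin_induction with
    | mem g hg => exact hmul g hg
    | algebraMap r => exact fun n hn => by simpa [← Algebra.smul_def] using N.smul_mem r hn
    | add u v _ _ hu hv => exact fun n hn => by simpa [add_mul] using N.add_mem (hu n hn) (hv n hn)
    | mul u v _ _ hu hv => exact fun n hn => by simpa [mul_assoc] using hu _ (hv n hn)
  exact eq_top_iff.2 fun v _ => by simpa using adjoin_mul_mem v (hs ▸ trivial) 1 h1

section QCommutator

open Submodule MulOpposite

variable {A : Type*} [Ring A] [Algebra Qq A]

def qcomm (x y : A) : A := x * y - qv • (y * x)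

/-- `x ^ α * y ^ β * x ^ γ` with `β - (α + γ) = a - c`, the difference written without
subtraction. -/
def xyxMonomials (x y : A) (a c : ℕ) : Set A :=
  {w | ∃ α β γ : ℕ, α + γ + a = β + c ∧ w = x ^ α * y ^ β * x ^ γ}

def pbwMonomials (x y : A) : Set A :=
  {w | ∃ a b c : ℕ, w = y ^ a * qcomm x y ^ b * x ^ c}

lemma qcomm_op (x y : A) : qcomm (op y) (op x) = op (qcomm x y) := by
  simp [qcomm]

variable {x y : A}

theorem mul_pow_succ_eq_add_qcomm (hy : qcomm x y * y = qv⁻¹ • (y * qcomm x y)) (n : ℕ) :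
    x * y ^ (n + 1) = qv ^ (n + 1) • (y ^ (n + 1) * x) + qint (n + 1) • (y ^ n * qcomm x y) := by
  have hxy : x * y = qcomm x y + qv • (y * x) := by rw [qcomm, sub_add_cancel]
  induction n with
  | zero => simp [qint_one, hxy, add_comm]
  | succ n ih =>
    rw [pow_succ' y (n + 1), ← mul_assoc, hxy, add_mul, mul_pow_eq_smul_pow_mul hy,
      smul_mul_assoc, mul_assoc, ih, qint_succ (n + 1)]
    simp only [mul_add, mul_smul_comm, smul_add, smul_smul, ← mul_assoc, ← pow_succ', add_smul]
    abel

theorem pow_mul_qcomm_eq (hy : qcomm x y * y = qv⁻¹ • (y * qcomm x y)) (n : ℕ) :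
    y ^ n * qcomm x y =
      (qint (n + 1))⁻¹ • (x * y ^ (n + 1) - qv ^ (n + 1) • (y ^ (n + 1) * x)) := by
  rw [mul_pow_succ_eq_add_qcomm hy, add_sub_cancel_left,
    inv_smul_smul₀ (qint_ne_zero n.succ_ne_zero)]

theorem mul_qcomm_mem_span_xyxMonomials (hx : x * qcomm x y = qv⁻¹ • (qcomm x y * x))
    (hy : qcomm x y * y = qv⁻¹ • (y * qcomm x y)) {a c : ℕ} {w : A}
    (hw : w ∈ span Qq (xyxMonomials x y a c)) :
    w * qcomm x y ∈ span Qq (xyxMonomials x y a c) := by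
  refine (span_le.2 ?_ : _ ≤ (span Qq _).comap (LinearMap.mulRight Qq (qcomm x y))) hw
  rintro _ ⟨α, β, γ, h, rfl⟩
  have hmove : x ^ α * y ^ β * x ^ γ * qcomm x y =
      (qv⁻¹) ^ γ • (x ^ α * (y ^ β * qcomm x y) * x ^ γ) := by
    rw [mul_assoc _ (x ^ γ), pow_mul_eq_smul_mul_pow hx, mul_smul_comm]
    simp only [mul_assoc]
  rw [SetLike.mem_coe, mem_comap, LinearMap.mulRight_apply, hmove, pow_mul_qcomm_eq hy]
  simp only [mul_sub, sub_mul, mul_smul_comm, smul_mul_assoc]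
  refine smul_mem _ _ <| smul_mem _ _ <| sub_mem
    (subset_span ⟨α + 1, β + 1, γ, by omega, by simp only [pow_succ, mul_assoc]⟩)
    (smul_mem _ _ <| subset_span
      ⟨α, β + 1, γ + 1, by omega, by rw [pow_succ' x γ]; simp only [mul_assoc]⟩)

theorem pbw_mem_span_xyxMonomials (hx : x * qcomm x y = qv⁻¹ • (qcomm x y * x))
    (hy : qcomm x y * y = qv⁻¹ • (y * qcomm x y)) (a b c : ℕ) :
    y ^ a * qcomm x y ^ b * x ^ c ∈ span Qq (xyxMonomials x y a c) := by
  induction b with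
  | zero => exact subset_span ⟨0, a, c, by omega, by simp⟩
  | succ b ih =>
    have hshift : y ^ a * qcomm x y ^ b * x ^ c * qcomm x y =
        (qv⁻¹) ^ c • (y ^ a * qcomm x y ^ (b + 1) * x ^ c) := by
      rw [mul_assoc _ (x ^ c), pow_mul_eq_smul_mul_pow hx, mul_smul_comm, pow_succ]
      simp only [mul_assoc]
    have := mul_qcomm_mem_span_xyxMonomials hx hy ih
    rwa [hshift, smul_mem_iff _ (pow_ne_zero _ (inv_ne_zero qv_ne_zero))] at this

/-- The mirror image of `pbw_mem_span_xyxMonomials`, obtained by applying it in `Aᵐᵒᵖ` to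
`op y, op x`, whose q-commutator is `op (qcomm x y)`. -/
theorem pbw_mem_span_yxyMonomials (hx : x * qcomm x y = qv⁻¹ • (qcomm x y * x))
    (hy : qcomm x y * y = qv⁻¹ • (y * qcomm x y)) (a b c : ℕ) :
    y ^ a * qcomm x y ^ b * x ^ c ∈ span Qq (xyxMonomials y x c a) := by
  have hop := pbw_mem_span_xyxMonomials (x := op y) (y := op x)
    (by simpa [qcomm_op] using congrArg op hy) (by simpa [qcomm_op] using congrArg op hx) c b a
  have hunop : span Qq (xyxMonomials (op y) (op x) c a) ≤
      (span Qq (xyxMonomials y x c a)).comap (opLinearEquiv Qq).symm.toLinearMap := by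
    refine span_le.2 ?_
    rintro _ ⟨α, β, γ, h, rfl⟩
    exact subset_span ⟨γ, β, α, by omega, by simp [← op_pow, ← op_mul, mul_assoc]⟩
  simpa [qcomm_op, ← op_pow, ← op_mul, mul_assoc] using hunop hop

theorem span_pbwMonomials_eq_top (hx : x * qcomm x y = qv⁻¹ • (qcomm x y * x))
    (hy : qcomm x y * y = qv⁻¹ • (y * qcomm x y)) (hgen : Algebra.adjoin Qq {x, y} = ⊤) :
    span Qq (pbwMonomials x y) = ⊤ := by
  have mul_mem_span (g : A) (hg : ∀ w ∈ pbwMonomials x y, g * w ∈ span Qq (pbwMonomials x y))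
      (w : A) (hw : w ∈ span Qq (pbwMonomials x y)) : g * w ∈ span Qq (pbwMonomials x y) :=
    (span_le.2 hg : _ ≤ (span Qq _).comap (LinearMap.mulLeft Qq g)) hw
  have hz (b c : ℕ) : x * (qcomm x y ^ b * x ^ c) = (qv⁻¹) ^ b • (qcomm x y ^ b * x ^ (c + 1)) := by
    rw [← mul_assoc, mul_pow_eq_smul_pow_mul hx, smul_mul_assoc, pow_succ' x c, mul_assoc]
  refine eq_top_of_one_mem_of_mul_mem hgen (subset_span ⟨0, 0, 0, by simp⟩) ?_
  simp only [Set.mem_insert_iff, Set.mem_singleton_iff, forall_eq_or_imp, forall_eq]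
  refine ⟨mul_mem_span x ?_, mul_mem_span y ?_⟩ <;> rintro _ ⟨a, b, c, rfl⟩
  · cases a with
    | zero =>
      have : qcomm x y ^ b * x ^ (c + 1) ∈ pbwMonomials x y := ⟨0, b, c + 1, by simp⟩
      simpa [hz] using smul_mem _ ((qv⁻¹) ^ b) (subset_span this)
    | succ a =>
      have hexp : x * (y ^ (a + 1) * qcomm x y ^ b * x ^ c) =
          (qv ^ (a + 1) * qv⁻¹ ^ b) • (y ^ (a + 1) * qcomm x y ^ b * x ^ (c + 1)) +
            qint (a + 1) • (y ^ a * qcomm x y ^ (b + 1) * x ^ c) := by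
        rw [mul_assoc (y ^ (a + 1)), ← mul_assoc, mul_pow_succ_eq_add_qcomm hy, add_mul,
          smul_mul_assoc, smul_mul_assoc, mul_assoc, hz, mul_smul_comm, smul_smul,
          pow_succ' (qcomm x y)]
        simp only [mul_assoc]
      rw [hexp]
      exact add_mem (smul_mem _ _ (subset_span ⟨a + 1, b, c + 1, rfl⟩))
        (smul_mem _ _ (subset_span ⟨a, b + 1, c, rfl⟩))
  · exact subset_span ⟨a + 1, b, c, by simp only [pow_succ', mul_assoc]⟩

end QCommutator

lemma serre (b : Bool) :
    (qv + qv⁻¹) • (θ b * θ (!b) * θ b) = θ b * θ b * θ (!b) + θ (!b) * θ b * θ b := by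
  simpa [θ] using RingQuot.mkAlgHom_rel Qq (SerreRel.serre b)

lemma θ_mul_qcomm :
    θ true * qcomm (θ true) (θ false) = qv⁻¹ • (qcomm (θ true) (θ false) * θ true) := by
  have h := serre true
  simp only [Bool.not_true, mul_assoc] at h
  simp only [qcomm, mul_sub, sub_mul, mul_smul_comm, smul_mul_assoc, mul_assoc, smul_sub, smul_smul,
    inv_mul_cancel₀ qv_ne_zero, one_smul]
  rw [sub_eq_sub_iff_add_eq_add, ← add_smul, add_comm qv⁻¹, h]

lemma qcomm_mul_θ :
    qcomm (θ true) (θ false) * θ false = qv⁻¹ • (θ false * qcomm (θ true) (θ false)) := by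
  have h := serre false
  simp only [Bool.not_false, mul_assoc] at h
  simp only [qcomm, mul_sub, sub_mul, mul_smul_comm, smul_mul_assoc, mul_assoc, smul_sub, smul_smul,
    inv_mul_cancel₀ qv_ne_zero, one_smul]
  rw [sub_eq_sub_iff_add_eq_add, ← add_smul, add_comm qv⁻¹, h, add_comm]

lemma adjoin_θ_eq_top : Algebra.adjoin Qq {θ true, θ false} = ⊤ := by
  have hgen : {θ true, θ false} =
      RingQuot.mkAlgHom Qq SerreRel '' Set.range (FreeAlgebra.ι Qq) := by
    ext
    simp only [θ, θfree, Set.mem_insert_iff, Set.mem_singleton_iff, Set.mem_image, Set.mem_range]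
    aesop
  rw [hgen, ← AlgHom.map_adjoin, FreeAlgebra.adjoin_range_ι, Algebra.map_top,
    (AlgHom.range_eq_top _).2 (RingQuot.mkAlgHom_surjective Qq SerreRel)]

lemma pow_mul_pow_mul_pow_mem_span {s : Set Uminus} {u v : Uminus} {α β γ : ℕ}
    (h : dp u α * dp v β * dp u γ ∈ s) : u ^ α * v ^ β * u ^ γ ∈ Submodule.span Qq s := by
  have hpow (w : Uminus) (n : ℕ) : w ^ n = qfac n • dp w n :=
    (smul_inv_smul₀ (qfac_ne_zero n) _).symm
  rw [hpow u α, hpow v β, hpow u γ, smul_mul_smul, smul_mul_smul]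
  exact Submodule.smul_mem _ _ (Submodule.subset_span h)

/-- the elements θ_i^{(a)}θ_j^{(b)}θ_i^{(c)} with b ≥ a + c together
with θ_j^{(c)}θ_i^{(b)}θ_j^{(a)} with b > a + c span f = U_q⁻(𝔰𝔩₃) as a
ℚ(q)-vector space. -/
theorem canonical_monomials_span :
    Submodule.span Qq
      ({x : Uminus | ∃ a b c : ℕ, b ≥ a + c ∧
          x = dp (θ true) a * dp (θ false) b * dp (θ true) c} ∪
       {x : Uminus | ∃ a b c : ℕ, b > a + c ∧
          x = dp (θ false) c * dp (θ true) b * dp (θ false) a}) = ⊤ := by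
  refine eq_top_iff.2 <| (span_pbwMonomials_eq_top θ_mul_qcomm qcomm_mul_θ adjoin_θ_eq_top).ge.trans
    (Submodule.span_le.2 ?_)
  rintro _ ⟨a, b, c, rfl⟩
  rcases le_or_gt c a with hca | hac
  · refine Submodule.span_le.2 ?_ (pbw_mem_span_xyxMonomials θ_mul_qcomm qcomm_mul_θ a b c)
    rintro _ ⟨α, β, γ, h, rfl⟩
    exact pow_mul_pow_mul_pow_mem_span (Or.inl ⟨α, β, γ, by omega, rfl⟩)
  · refine Submodule.span_le.2 ?_ (pbw_mem_span_yxyMonomials θ_mul_qcomm qcomm_mul_θ a b c)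
    rintro _ ⟨α, β, γ, h, rfl⟩
    exact pow_mul_pow_mul_pow_mem_span (Or.inr ⟨γ, β, α, by omega, rfl⟩)

end
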